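/- The allocation produced by the two-user algorithm achieves equal weighted rates: with k_min and α_{k_min} as defined, assigning user 1 the full bins 1,...,k_min−1 plus fraction α_{k_min} of bin k_min, and user 2 fraction 1−α_{k_min} of bin k_min plus the full bins k_min+1,...,K, the resulting rates satisfy R_1 = A_{k_min−1} + α_{k_min} R_{1 k_min} and R_2 = (1−α_{k_min}) R_{2 k_min} + B_{k_min}, and they obey R_1 = γ R_2. -/

import Mathlib

/-! Since `B_{k-1} = R_{2k} + B_k`, the equation `A_{k-1} + α R_{1k} = γ ((1 - α) R_{2k} + B_k)`
is linear in `α` with coefficient `R_{1k} + γ R_{2k} > 0`, and `α_{k_min}` is its solution. -/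

open Finset

theorem Finset.sum_Icc_eq_add_sum_Icc_succ {M : Type*} [AddCommMonoid M] (f : ℕ → M) {k K : ℕ}
    (h : k ≤ K) : ∑ m ∈ Icc k K, f m = f k + ∑ m ∈ Icc (k + 1) K, f m := by
  rw [Icc_add_one_left_eq_Ioc, add_sum_Ioc_eq_sum_Icc h]

theorem split_bin_rates_balanced {F : Type*} [Field F] {γ a b A B : F} (h : a + γ * b ≠ 0) :
    A + (γ * (b + B) - A) / (a + γ * b) * a
      = γ * ((1 - (γ * (b + B) - A) / (a + γ * b)) * b + B) := by
  field_simp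
  ring

theorem two_user_algorithm_equal_weighted_rates_general (K : ℕ)
    (γ : ℝ) (hγ : 0 < γ)
    (R1 R2 : ℕ → ℝ)
    (hR1 : ∀ k ∈ Finset.Icc 1 K, 0 < R1 k)
    (hR2 : ∀ k ∈ Finset.Icc 1 K, 0 < R2 k)
    (A B : ℕ → ℝ)
    (hB : ∀ k, B k = ∑ m ∈ Finset.Icc (k + 1) K, R2 m)
    (kmin : ℕ) (hk1 : 1 ≤ kmin) (hkK : kmin ≤ K)
    (α R₁ R₂ : ℝ)
    (hα : α = (γ * B (kmin - 1) - A (kmin - 1)) / (R1 kmin + γ * R2 kmin))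
    (hR₁ : R₁ = A (kmin - 1) + α * R1 kmin)
    (hR₂ : R₂ = (1 - α) * R2 kmin + B kmin) :
    R₁ = γ * R₂ := by
  have hkmin : kmin ∈ Icc 1 K := mem_Icc.mpr ⟨hk1, hkK⟩
  have hden : R1 kmin + γ * R2 kmin ≠ 0 := by
    have := hR1 kmin hkmin
    have := hR2 kmin hkmin
    positivity
  have hB_pred : B (kmin - 1) = R2 kmin + B kmin := by
    rw [hB, hB, Nat.sub_add_cancel hk1, sum_Icc_eq_add_sum_Icc_succ _ hkK]
  subst hR₁ hR₂ hα
  rw [hB_pred]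
  exact split_bin_rates_balanced hden

/-- The allocation produced by the two-user algorithm achieves equal weighted rates:
`R₁ = γ R₂`. -/
theorem two_user_algorithm_equal_weighted_rates (K : ℕ) (hK : 1 ≤ K)
    (γ : ℝ) (hγ : 0 < γ)
    (R1 R2 : ℕ → ℝ)
    (hR1 : ∀ k ∈ Finset.Icc 1 K, 0 < R1 k)
    (hR2 : ∀ k ∈ Finset.Icc 1 K, 0 < R2 k)
    (A B : ℕ → ℝ)
    (hA : ∀ k, A k = ∑ m ∈ Finset.Icc 1 k, R1 m)
    (hB : ∀ k, B k = ∑ m ∈ Finset.Icc (k + 1) K, R2 m)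
    (kmin : ℕ) (hk1 : 1 ≤ kmin) (hkK : kmin ≤ K)
    (hge : γ * B kmin ≤ A kmin)
    (hmin : ∀ j, 1 ≤ j → j < kmin → A j < γ * B j)
    (α R₁ R₂ : ℝ)
    (hα : α = (γ * B (kmin - 1) - A (kmin - 1)) / (R1 kmin + γ * R2 kmin))
    (hR₁ : R₁ = A (kmin - 1) + α * R1 kmin)
    (hR₂ : R₂ = (1 - α) * R2 kmin + B kmin) :
    R₁ = γ * R₂ :=
  two_user_algorithm_equal_weighted_rates_general K γ hγ R1 R2 hR1 hR2 A B hB kmin hk1 hkK α R₁ R₂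
    hα hR₁ hR₂
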